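/- arXiv:1409.3453 — 6 statements merged into one kernel-verified Lean document; each statement's English description precedes it below -/
import Mathlib

section
/- With M the Kronig–Penney single-cell transfer matrix (with 0 < E < V, k = √E, z = √(V−E)) and Φ := Re(m₁₁) = cos(kδ)cosh(zλ) + ((z²−k²)/(2kz))·sin(kδ)sinh(zλ), the transmission coefficient S_N := 1/|(M^N)₁₁|² satisfies, for every N ≥ 1, S_N = [1 + ((V/(2kz))·sinh(zλ)·U_{N−1}(Φ))²]^{−1}, where U_{N−1} is the (N−1)-th Chebyshev polynomial of the second kind. -/
open Real Complex Polynomial Polynomial.Chebyshev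

/-!
Writing `M = !![m₁₁, m₁₂; m̄₁₂, m̄₁₁]`, the identity `(k² + z²)² = (z² − k²)² + (2kz)²` makes
`det M = |m₁₁|² − |m₁₂|² = 1`, and `tr M = 2Φ`. Cayley–Hamilton then reads `M² = 2Φ M − 1`, which is
the Chebyshev recurrence, so `M^N = U_{N−1}(Φ) M − U_{N−2}(Φ)`; in particular
`(M^N)₁₂ = U_{N−1}(Φ) m₁₂`. Matrices of the shape of `M` form a monoid, so `M^N` has the same shape
and determinant one, whence `|(M^N)₁₁|² = 1 + |(M^N)₁₂|² = 1 + (V/(2kz) sinh(zλ) U_{N−1}(Φ))²`.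
-/

theorem pow_eq_chebyshevU_smul_sub {R A : Type*} [CommRing R] [Ring A] [Algebra R A]
    {x : R} {a : A} (ha : a ^ 2 = (2 * x) • a - 1) (n : ℕ) :
    a ^ n = (U R (n - 1)).eval x • a - (U R (n - 2)).eval x • (1 : A) := by
  induction n with
  | zero => simp [U_neg_one, U_neg_two]
  | succ n ih =>
    have hU : U R ((n + 1 : ℕ) - 1) = 2 * X * U R (n - 1) - U R (n - 2) := by
      rw [U_eq]; push_cast; ring_nf
    rw [pow_succ, ih, hU, show ((n + 1 : ℕ) : ℤ) - 2 = n - 1 by push_cast; ring, sub_mul,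
      smul_mul_assoc, smul_mul_assoc, one_mul, ← sq, ha]
    simp only [eval_sub, eval_mul, eval_X, eval_ofNat]
    module

theorem Matrix.sq_eq_trace_smul_sub_det_smul {R : Type*} [CommRing R]
    (A : Matrix (Fin 2) (Fin 2) R) : A ^ 2 = A.trace • A - A.det • 1 := by
  ext i j
  fin_cases i <;> fin_cases j <;>
    simp [sq, Matrix.mul_apply, Matrix.trace_fin_two, Matrix.det_fin_two] <;> ring

def Matrix.conjPaired (R : Type*) [CommRing R] [StarRing R] :
    Submonoid (Matrix (Fin 2) (Fin 2) R) where
  carrier := {A | A 1 0 = star (A 0 1) ∧ A 1 1 = star (A 0 0)}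
  mul_mem' := by
    rintro A B ⟨hA₁₀, hA₁₁⟩ ⟨hB₁₀, hB₁₁⟩
    simp only [Set.mem_ofPred_eq, Matrix.mul_apply, Fin.sum_univ_two, hA₁₀, hA₁₁, hB₁₀, hB₁₁,
      star_add, star_mul', star_star]
    constructor <;> ring
  one_mem' := by simp

theorem Matrix.det_of_mem_conjPaired {R : Type*} [CommRing R] [StarRing R]
    {A : Matrix (Fin 2) (Fin 2) R} (hA : A ∈ conjPaired R) :
    A.det = A 0 0 * star (A 0 0) - A 0 1 * star (A 0 1) := by
  rw [Matrix.det_fin_two, hA.1, hA.2]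

theorem Matrix.normSq_apply_zero_zero_of_mem_conjPaired {A : Matrix (Fin 2) (Fin 2) ℂ}
    (hA : A ∈ conjPaired ℂ) (hdet : A.det = 1) :
    normSq (A 0 0) = 1 + normSq (A 0 1) := by
  rw [det_of_mem_conjPaired hA] at hdet
  have : (normSq (A 0 0) : ℂ) - normSq (A 0 1) = 1 := by
    rwa [← mul_conj, ← mul_conj, ← star_def]
  exact_mod_cast eq_add_of_sub_eq this

theorem normSq_ofReal_add_I_mul (x y : ℝ) : normSq (x + I * y) = x ^ 2 + y ^ 2 := by
  rw [mul_comm, normSq_add_mul_I]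

theorem normSq_sin_add_I_mul_cos (θ : ℝ) :
    normSq ((Real.sin θ : ℂ) + I * (Real.cos θ : ℂ)) = 1 := by
  rw [normSq_ofReal_add_I_mul, Real.sin_sq_add_cos_sq]

theorem sq_add_sq_div_two_mul {k z : ℝ} (hk : k ≠ 0) (hz : z ≠ 0) :
    ((k ^ 2 + z ^ 2) / (2 * k * z)) ^ 2 = ((z ^ 2 - k ^ 2) / (2 * k * z)) ^ 2 + 1 := by
  field_simp
  ring

theorem kronigPenney_cell_det_identity {a c θ η : ℝ} (hac : a ^ 2 = c ^ 2 + 1) :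
    (Real.cos θ * Real.cosh η + c * Real.sin θ * Real.sinh η) ^ 2
      + (-Real.sin θ * Real.cosh η + c * Real.cos θ * Real.sinh η) ^ 2
      - (a * Real.sinh η) ^ 2 = 1 := by
  linear_combination (Real.cosh η ^ 2 + c ^ 2 * Real.sinh η ^ 2) * Real.sin_sq_add_cos_sq θ
    - Real.sinh η ^ 2 * hac + Real.cosh_sq_sub_sinh_sq η

theorem KP_transmission_coefficient_general (E V δ lam : ℝ) (hE : 0 < E) (hEV : E < V)
    (k z : ℝ) (hk : k = Real.sqrt E) (hz : z = Real.sqrt (V - E))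
    (m₁₁ m₁₂ : ℂ) (Φ : ℝ)
    (hΦ : Φ = Real.cos (k * δ) * Real.cosh (z * lam)
        + (z ^ 2 - k ^ 2) / (2 * k * z) * Real.sin (k * δ) * Real.sinh (z * lam))
    (h11 : m₁₁ = ((Φ : ℝ) : ℂ)
      + Complex.I * ((- Real.sin (k * δ) * Real.cosh (z * lam)
        + (z ^ 2 - k ^ 2) / (2 * k * z) * Real.cos (k * δ) * Real.sinh (z * lam) : ℝ) : ℂ))
    (h12 : m₁₂ = ((V / (2 * k * z) : ℝ) : ℂ)
      * (((Real.sin (k * δ) : ℝ) : ℂ) + Complex.I * ((Real.cos (k * δ) : ℝ) : ℂ))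
      * ((Real.sinh (z * lam) : ℝ) : ℂ))
    (M : Matrix (Fin 2) (Fin 2) ℂ)
    (hM : M = Matrix.of !![m₁₁, m₁₂; starRingEnd ℂ m₁₂, starRingEnd ℂ m₁₁])
    (N : ℕ) :
    1 / ‖(M ^ N) 0 0‖ ^ 2
      = (1 + (V / (2 * k * z) * Real.sinh (z * lam)
          * (U ℝ ((N : ℤ) - 1)).eval Φ) ^ 2)⁻¹ := by
  have hk₀ : 0 < k := hk ▸ Real.sqrt_pos.2 hE
  have hz₀ : 0 < z := hz ▸ Real.sqrt_pos.2 (by linarith)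
  have hV : k ^ 2 + z ^ 2 = V := by
    rw [hk, hz, Real.sq_sqrt hE.le, Real.sq_sqrt (by linarith)]
    ring
  have hcoeff : (V / (2 * k * z)) ^ 2 = ((z ^ 2 - k ^ 2) / (2 * k * z)) ^ 2 + 1 :=
    hV ▸ sq_add_sq_div_two_mul hk₀.ne' hz₀.ne'
  have hnorm₁₂ : normSq m₁₂ = (V / (2 * k * z) * Real.sinh (z * lam)) ^ 2 := by
    rw [h12, normSq_mul, normSq_mul, normSq_ofReal, normSq_ofReal, normSq_sin_add_I_mul_cos]
    ring
  have hM₀₀ : M 0 0 = m₁₁ := by rw [hM]; rfl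
  have hM₀₁ : M 0 1 = m₁₂ := by rw [hM]; rfl
  have hmem : M ∈ Matrix.conjPaired ℂ := by
    subst hM
    exact ⟨rfl, rfl⟩
  have hdet : M.det = 1 := by
    rw [Matrix.det_of_mem_conjPaired hmem, star_def, mul_conj, mul_conj, hM₀₀, hM₀₁, hnorm₁₂, h11,
      normSq_ofReal_add_I_mul, hΦ]
    exact_mod_cast kronigPenney_cell_det_identity hcoeff
  have htr : M.trace = ((2 * Φ : ℝ) : ℂ) := by
    rw [Matrix.trace_fin_two, hmem.2, star_def, add_conj, hM₀₀, h11, add_re, ofReal_re, I_mul_re,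
      ofReal_im, neg_zero, add_zero]
  have hsq : M ^ 2 = (2 * Φ) • M - 1 := by
    rw [M.sq_eq_trace_smul_sub_det_smul, htr, hdet, one_smul, Complex.coe_smul]
  have h₀₁ : (M ^ N) 0 1 = (U ℝ ((N : ℤ) - 1)).eval Φ * m₁₂ := by
    simp [pow_eq_chebyshevU_smul_sub hsq N, hM₀₁, real_smul]
  rw [one_div, Complex.sq_norm, Matrix.normSq_apply_zero_zero_of_mem_conjPaired (pow_mem hmem N)
    (by rw [Matrix.det_pow, hdet, one_pow]), h₀₁, normSq_mul, normSq_ofReal, hnorm₁₂]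
  ring

/-- The transmission coefficient `S_N = 1/|(M^N)₁₁|²` of the `N`-cell Kronig–Penney model
equals `[1 + ((V/(2kz)) sinh(zλ) U_{N−1}(Φ))²]⁻¹`, where `Φ = Re m₁₁` and `U` are the
Chebyshev polynomials of the second kind. -/
theorem KP_transmission_coefficient (E V δ lam : ℝ) (hE : 0 < E) (hEV : E < V)
    (hδ : 0 < δ) (hlam : 0 < lam) (k z : ℝ) (hk : k = Real.sqrt E) (hz : z = Real.sqrt (V - E))
    (m₁₁ m₁₂ : ℂ) (Φ : ℝ)
    (hΦ : Φ = Real.cos (k * δ) * Real.cosh (z * lam)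
        + (z ^ 2 - k ^ 2) / (2 * k * z) * Real.sin (k * δ) * Real.sinh (z * lam))
    (h11 : m₁₁ = ((Φ : ℝ) : ℂ)
      + Complex.I * ((- Real.sin (k * δ) * Real.cosh (z * lam)
        + (z ^ 2 - k ^ 2) / (2 * k * z) * Real.cos (k * δ) * Real.sinh (z * lam) : ℝ) : ℂ))
    (h12 : m₁₂ = ((V / (2 * k * z) : ℝ) : ℂ)
      * (((Real.sin (k * δ) : ℝ) : ℂ) + Complex.I * ((Real.cos (k * δ) : ℝ) : ℂ))
      * ((Real.sinh (z * lam) : ℝ) : ℂ))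
    (M : Matrix (Fin 2) (Fin 2) ℂ)
    (hM : M = Matrix.of !![m₁₁, m₁₂; starRingEnd ℂ m₁₂, starRingEnd ℂ m₁₁])
    (N : ℕ) (hN : 1 ≤ N) :
    1 / ‖(M ^ N) 0 0‖ ^ 2
      = (1 + (V / (2 * k * z) * Real.sinh (z * lam)
          * (U ℝ ((N : ℤ) - 1)).eval Φ) ^ 2)⁻¹ :=
  KP_transmission_coefficient_general E V δ lam hE hEV k z hk hz m₁₁ m₁₂ Φ hΦ h11 h12 M hM N
end

section
/- Fix γ, L > 0 and reals 0 < E < V, and set δ_N = L/((1+γ)N), λ_N = γL/((1+γ)N), k = √E, z = √(V−E), E₀ = γV/(1+γ). Define Φ_N = cos(kδ_N)cosh(zλ_N) + ((z²−k²)/(2kz))·sin(kδ_N)sinh(zλ_N). Then N²·(1 − Φ_N) converges to (E − E₀)·L²/2 as N → ∞. -/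
/-!
Write `t = 1/N`, so that `Φ_N = cos(a t) cosh(b t) + c sin(a t) sinh(b t)` with
`a = kL/(1+γ)`, `b = zγL/(1+γ)`, `c = (z² − k²)/(2kz)`. The half-angle formulas give
`1 − cos(a t) cosh(b t) = 2 sin²(a t/2) cosh(b t) − 2 sinh²(b t/2)`, so `(1 − Φ)/t²` is a
polynomial in the difference quotients `sin(αt)/t → α`, `sinh(βt)/t → β` and `cosh(bt) → 1`,
and tends to `(a² − b²)/2 − c a b`. With `k² = E`, `z² = V − E` this equals `(E − E₀)L²/2`.
-/

open Real Filter Topology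

noncomputable def kronigPenneyHalfTrace (a b c t : ℝ) : ℝ :=
  cos (a * t) * cosh (b * t) + c * sin (a * t) * sinh (b * t)

lemma tendsto_sin_mul_div_self (a : ℝ) :
    Tendsto (fun t => sin (a * t) / t) (𝓝[≠] 0) (𝓝 a) := by
  have h := ((hasDerivAt_id (0 : ℝ)).const_mul a).sin.tendsto_slope_zero
  simpa [div_eq_inv_mul] using h

lemma tendsto_sinh_mul_div_self (b : ℝ) :
    Tendsto (fun t => sinh (b * t) / t) (𝓝[≠] 0) (𝓝 b) := by
  have h := ((hasDerivAt_id (0 : ℝ)).const_mul b).sinh.tendsto_slope_zero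
  simpa [div_eq_inv_mul] using h

lemma one_sub_cos_mul_cosh (x y : ℝ) :
    1 - cos x * cosh y = 2 * sin (x / 2) ^ 2 * cosh y - 2 * sinh (y / 2) ^ 2 := by
  have hcos := cos_two_mul_eq_one_sub (x / 2)
  have hcosh := cosh_two_mul (y / 2)
  rw [mul_div_cancel₀ x two_ne_zero] at hcos
  rw [mul_div_cancel₀ y two_ne_zero, cosh_sq] at hcosh
  rw [hcos, hcosh]
  ring

lemma tendsto_one_sub_kronigPenneyHalfTrace_div_sq (a b c : ℝ) :
    Tendsto (fun t => (1 - kronigPenneyHalfTrace a b c t) / t ^ 2) (𝓝[≠] 0)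
      (𝓝 ((a ^ 2 - b ^ 2) / 2 - c * a * b)) := by
  have hcosh : Tendsto (fun t => cosh (b * t)) (𝓝[≠] 0) (𝓝 1) := by
    have : Continuous fun t => cosh (b * t) := by fun_prop
    simpa using this.tendsto 0 |>.mono_left nhdsWithin_le_nhds
  have hlim := ((((tendsto_sin_mul_div_self (a / 2)).pow 2).const_mul 2).mul hcosh).sub
    ((((tendsto_sinh_mul_div_self (b / 2)).pow 2).const_mul 2)) |>.sub
    (((tendsto_sin_mul_div_self a).mul (tendsto_sinh_mul_div_self b)).const_mul c)
  convert hlim using 2 with t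
  · simp only [kronigPenneyHalfTrace, sub_add_eq_sub_sub, one_sub_cos_mul_cosh, mul_div_right_comm]
    ring
  · ring

lemma tendsto_natCast_inv_nhdsNE_zero :
    Tendsto (fun N : ℕ => (N : ℝ)⁻¹) atTop (𝓝[≠] 0) :=
  (tendsto_inv_atTop_nhdsGT_zero.comp tendsto_natCast_atTop_atTop).mono_right
    (nhdsGT_le_nhdsNE 0)

theorem KP_phi_asymptotics_general (γ L E V : ℝ) (hγ : 0 < γ)
    (hE : 0 < E) (hEV : E < V) (k z E₀ : ℝ)
    (hk : k = Real.sqrt E) (hz : z = Real.sqrt (V - E)) (hE₀ : E₀ = γ * V / (1 + γ))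
    (δ lam Φ : ℕ → ℝ)
    (hδ : ∀ N, δ N = L / ((1 + γ) * N)) (hlam : ∀ N, lam N = γ * L / ((1 + γ) * N))
    (hΦ : ∀ N, Φ N = Real.cos (k * δ N) * Real.cosh (z * lam N)
        + (z ^ 2 - k ^ 2) / (2 * k * z) * Real.sin (k * δ N) * Real.sinh (z * lam N)) :
    Tendsto (fun N : ℕ => (N : ℝ) ^ 2 * (1 - Φ N)) atTop (nhds ((E - E₀) * L ^ 2 / 2)) := by
  have hscale : ∀ (m : ℝ) (N : ℕ), m * (L / ((1 + γ) * N)) = m * L / (1 + γ) * (N : ℝ)⁻¹ :=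
    fun m N => by rw [div_mul_eq_div_div]; ring
  have hΦ_eq : ∀ N : ℕ, Φ N = kronigPenneyHalfTrace (k * L / (1 + γ)) (z * γ * L / (1 + γ))
      ((z ^ 2 - k ^ 2) / (2 * k * z)) (N : ℝ)⁻¹ := by
    intro N
    rw [hΦ, kronigPenneyHalfTrace, hδ, hlam, mul_div_assoc γ, ← mul_assoc, hscale, hscale]
  have hk2 : k ^ 2 = E := by rw [hk, sq_sqrt hE.le]
  have hz2 : z ^ 2 = V - E := by rw [hz, sq_sqrt (sub_nonneg.2 hEV.le)]
  have hk0 : k ≠ 0 := by rw [hk]; positivity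
  have hz0 : z ≠ 0 := by rw [hz]; exact (sqrt_pos.2 (sub_pos.2 hEV)).ne'
  have hγ0 : 1 + γ ≠ 0 := by positivity
  have hlimit : ((k * L / (1 + γ)) ^ 2 - (z * γ * L / (1 + γ)) ^ 2) / 2
      - (z ^ 2 - k ^ 2) / (2 * k * z) * (k * L / (1 + γ)) * (z * γ * L / (1 + γ))
      = (E - E₀) * L ^ 2 / 2 := by
    rw [hE₀, show V = z ^ 2 + k ^ 2 by linarith, ← hk2]
    field_simp
    ring
  rw [← hlimit]
  refine ((tendsto_one_sub_kronigPenneyHalfTrace_div_sq _ _ _).comp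
    tendsto_natCast_inv_nhdsNE_zero).congr ?_
  intro N
  rw [Function.comp_apply, hΦ_eq, inv_pow, div_inv_eq_mul, mul_comm]

/-- In the continuum limit `δ_N = L/((1+γ)N)`, `λ_N = γL/((1+γ)N)`, the half-trace
`Φ_N` of the Kronig–Penney single-cell transfer matrix satisfies
`N²(1 − Φ_N) → (E − E₀)L²/2`, where `E₀ = γV/(1+γ)`. -/
theorem KP_phi_asymptotics (γ L E V : ℝ) (hγ : 0 < γ) (hL : 0 < L)
    (hE : 0 < E) (hEV : E < V) (k z E₀ : ℝ)
    (hk : k = Real.sqrt E) (hz : z = Real.sqrt (V - E)) (hE₀ : E₀ = γ * V / (1 + γ))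
    (δ lam Φ : ℕ → ℝ)
    (hδ : ∀ N, δ N = L / ((1 + γ) * N)) (hlam : ∀ N, lam N = γ * L / ((1 + γ) * N))
    (hΦ : ∀ N, Φ N = Real.cos (k * δ N) * Real.cosh (z * lam N)
        + (z ^ 2 - k ^ 2) / (2 * k * z) * Real.sin (k * δ N) * Real.sinh (z * lam N)) :
    Tendsto (fun N : ℕ => (N : ℝ) ^ 2 * (1 - Φ N)) atTop (nhds ((E - E₀) * L ^ 2 / 2)) :=
  KP_phi_asymptotics_general γ L E V hγ hE hEV k z E₀ hk hz hE₀ δ lam Φ hδ hlam hΦ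
end

section
/- Fix γ, L > 0 and reals E₀ < E < V where E₀ = γV/(1+γ). Set δ_N = L/((1+γ)N), λ_N = γL/((1+γ)N), k = √E, z = √(V−E), Φ_N = cos(kδ_N)cosh(zλ_N) + ((z²−k²)/(2kz))sin(kδ_N)sinh(zλ_N), and ϑ = √(E−E₀). Then (U_{N−1}(Φ_N)/N)² converges to sin²(ϑL)/(ϑL)² as N → ∞ (with the convention sin(0)/0 = 1), where U_{N−1} are the Chebyshev polynomials of the second kind. -/
/-!
Put `θ_N = arccos Φ_N`, so that `U_{N-1}(Φ_N) / N = sinc (N θ_N) / sinc θ_N`; it suffices to show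
`N θ_N → ϑL`. Writing `Φ_N = g(1/N)` with `g t = cos (a t) cosh (b t) + c sin (a t) sinh (b t)`,
`a = kL/(1+γ)`, `b = γzL/(1+γ)`, `c = (z²-k²)/(2kz)`, one has
`1 - g t = t² ((a² - b²)/2 - abc) + o(t²)`, and `a² - b² - 2abc = (ϑL)²` because
`k² - γz² = (1+γ)(E - E₀)`. Hence `N² (1 - cos θ_N) → (ϑL)²/2`, and `1 - cos θ ~ θ²/2` forces
`N θ_N → ϑL`.
-/

open Real Filter Polynomial Polynomial.Chebyshev Topology

theorem Differentiable.continuous_dslope {𝕜 E : Type*} [NontriviallyNormedField 𝕜]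
    [NormedAddCommGroup E] [NormedSpace 𝕜 E] {f : 𝕜 → E} (hf : Differentiable 𝕜 f) (a : 𝕜) :
    Continuous (dslope f a) := by
  refine continuous_iff_continuousAt.2 fun x => ?_
  rcases eq_or_ne x a with rfl | hx
  · exact continuousAt_dslope_same.2 (hf x)
  · exact (continuousAt_dslope_of_ne hx).2 (hf x).continuousAt

namespace Real

theorem sin_eq_mul_sinc (x : ℝ) : sin x = x * sinc x := by
  simpa [sinc_eq_dslope] using (sub_smul_dslope_of_zero sin_zero x).symm

theorem sinh_eq_mul_dslope_sinh (x : ℝ) : sinh x = x * dslope sinh 0 x := by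
  simpa using (sub_smul_dslope_of_zero sinh_zero x).symm

theorem one_sub_cos_eq_mul_sinc_sq (x : ℝ) : 1 - cos x = x ^ 2 / 2 * sinc (x / 2) ^ 2 := by
  have h : cos x = cos (2 * (x / 2)) := by ring_nf
  rw [h, cos_two_mul, cos_sq', sin_eq_mul_sinc (x / 2)]
  ring

theorem cosh_sub_one_eq_mul_dslope_sinh_sq (x : ℝ) :
    cosh x - 1 = x ^ 2 / 2 * dslope sinh 0 (x / 2) ^ 2 := by
  have h : cosh x = cosh (2 * (x / 2)) := by ring_nf
  rw [h, cosh_two_mul, cosh_sq, sinh_eq_mul_dslope_sinh (x / 2)]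
  ring

theorem tendsto_one_sub_cos_mul_cosh_add_sin_mul_sinh_div_sq (a b c : ℝ) :
    Tendsto (fun t => (1 - (cos (a * t) * cosh (b * t) + c * sin (a * t) * sinh (b * t))) / t ^ 2)
      (𝓝[≠] 0) (𝓝 ((a ^ 2 - b ^ 2) / 2 - c * a * b)) := by
  set F : ℝ → ℝ := fun t => a ^ 2 / 2 * sinc (a * t / 2) ^ 2
      - cos (a * t) * (b ^ 2 / 2 * dslope sinh 0 (b * t / 2) ^ 2)
      - c * a * b * (sinc (a * t) * dslope sinh 0 (b * t))
  have hF : Continuous F := by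
    have := differentiable_sinh.continuous_dslope 0
    fun_prop
  have hF0 : F 0 = (a ^ 2 - b ^ 2) / 2 - c * a * b := by
    simp only [F, mul_zero, zero_div, sinc_zero, cos_zero, dslope_same, deriv_sinh, cosh_zero]
    ring
  have hexpand : ∀ t, 1 - (cos (a * t) * cosh (b * t) + c * sin (a * t) * sinh (b * t))
      = t ^ 2 * F t := by
    intro t
    rw [sin_eq_mul_sinc (a * t), sinh_eq_mul_dslope_sinh (b * t)]
    linear_combination one_sub_cos_eq_mul_sinc_sq (a * t)
      - cos (a * t) * cosh_sub_one_eq_mul_dslope_sinh_sq (b * t)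
  refine ((hF0 ▸ hF.tendsto 0).mono_left nhdsWithin_le_nhds).congr' ?_
  filter_upwards [self_mem_nhdsWithin] with t ht
  rw [hexpand, mul_div_cancel_left₀ _ (pow_ne_zero 2 ht)]

end Real

theorem Polynomial.Chebyshev.U_sub_one_real_cos_div {n : ℕ} (hn : n ≠ 0) {θ : ℝ}
    (hθ : sin θ ≠ 0) : (U ℝ ((n : ℤ) - 1)).eval (cos θ) / n = sinc (n * θ) / sinc θ := by
  have hθ0 : θ ≠ 0 := by rintro rfl; simp at hθ
  have hU := U_real_cos θ ((n : ℤ) - 1)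
  push_cast at hU
  rw [sub_add_cancel] at hU
  rw [sinc_of_ne_zero hθ0, sinc_of_ne_zero (mul_ne_zero (Nat.cast_ne_zero.2 hn) hθ0), ← hU]
  field_simp

section ChebyshevLimit

variable {x : ℕ → ℝ}

theorem tendsto_one_of_tendsto_sq_mul_one_sub {l : ℝ}
    (hx : Tendsto (fun N : ℕ => (N : ℝ) ^ 2 * (1 - x N)) atTop (𝓝 l)) :
    Tendsto x atTop (𝓝 1) := by
  have h := hx.mul ((tendsto_inv_atTop_nhds_zero_nat (𝕜 := ℝ)).pow 2)
  rw [zero_pow two_ne_zero, mul_zero] at h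
  have h' : Tendsto (fun N : ℕ => 1 - x N) atTop (𝓝 0) := by
    refine h.congr' ?_
    filter_upwards [eventually_ne_atTop 0] with N hN
    field_simp
  simpa using (tendsto_const_nhds (x := (1 : ℝ))).sub h'

theorem eventually_mem_Ioo_of_tendsto_sq_mul_one_sub {l : ℝ} (hl : 0 < l)
    (hx : Tendsto (fun N : ℕ => (N : ℝ) ^ 2 * (1 - x N)) atTop (𝓝 l)) :
    ∀ᶠ N in atTop, x N ∈ Set.Ioo (-1) 1 := by
  filter_upwards [hx.eventually (eventually_gt_nhds hl),
    (tendsto_one_of_tendsto_sq_mul_one_sub hx).eventually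
      (eventually_gt_nhds (by norm_num : (-1 : ℝ) < 1))] with N hpos hgt
  exact ⟨hgt, by linarith [pos_of_mul_pos_right hpos (sq_nonneg _)]⟩

theorem tendsto_arccos_of_tendsto_sq_mul_one_sub {l : ℝ}
    (hx : Tendsto (fun N : ℕ => (N : ℝ) ^ 2 * (1 - x N)) atTop (𝓝 l)) :
    Tendsto (fun N => arccos (x N)) atTop (𝓝 0) := by
  have h := (continuous_arccos.tendsto 1).comp (tendsto_one_of_tendsto_sq_mul_one_sub hx)
  rwa [arccos_one] at h

theorem tendsto_natCast_mul_arccos_of_tendsto_sq_mul_one_sub {s : ℝ} (hs : 0 < s)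
    (hx : Tendsto (fun N : ℕ => (N : ℝ) ^ 2 * (1 - x N)) atTop (𝓝 (s ^ 2 / 2))) :
    Tendsto (fun N : ℕ => N * arccos (x N)) atTop (𝓝 s) := by
  have hsinc : Tendsto (fun N => sinc (arccos (x N) / 2) ^ 2 / 2) atTop (𝓝 (1 / 2)) := by
    have hθ : Tendsto (fun N => arccos (x N) / 2) atTop (𝓝 0) := by
      simpa using (tendsto_arccos_of_tendsto_sq_mul_one_sub hx).div_const 2
    simpa using (((continuous_sinc.tendsto 0).comp hθ).pow 2).div_const 2
  have hsq : Tendsto (fun N : ℕ => (N * arccos (x N)) ^ 2) atTop (𝓝 (s ^ 2)) := by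
    have h := hx.div hsinc one_half_pos.ne'
    rw [show s ^ 2 / 2 / (1 / 2) = s ^ 2 by ring] at h
    refine h.congr' ?_
    filter_upwards [eventually_mem_Ioo_of_tendsto_sq_mul_one_sub (by positivity) hx,
      hsinc.eventually_ne one_half_pos.ne'] with N hN hne
    have h1 : 1 - x N = arccos (x N) ^ 2 / 2 * sinc (arccos (x N) / 2) ^ 2 := by
      rw [← one_sub_cos_eq_mul_sinc_sq, cos_arccos hN.1.le hN.2.le]
    rw [Pi.div_apply, h1, div_eq_iff hne]
    ring
  have h := (continuous_sqrt.tendsto _).comp hsq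
  rw [sqrt_sq hs.le] at h
  exact h.congr fun N => sqrt_sq (mul_nonneg (Nat.cast_nonneg N) (arccos_nonneg _))

theorem tendsto_U_sub_one_eval_div_of_tendsto_sq_mul_one_sub {s : ℝ} (hs : 0 < s)
    (hx : Tendsto (fun N : ℕ => (N : ℝ) ^ 2 * (1 - x N)) atTop (𝓝 (s ^ 2 / 2))) :
    Tendsto (fun N : ℕ => (U ℝ ((N : ℤ) - 1)).eval (x N) / N) atTop (𝓝 (sinc s)) := by
  have h := ((continuous_sinc.tendsto s).comp
    (tendsto_natCast_mul_arccos_of_tendsto_sq_mul_one_sub hs hx)).div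
    ((continuous_sinc.tendsto 0).comp (tendsto_arccos_of_tendsto_sq_mul_one_sub hx))
    (by simp)
  rw [sinc_zero, div_one] at h
  refine h.congr' ?_
  filter_upwards [eventually_mem_Ioo_of_tendsto_sq_mul_one_sub (by positivity) hx,
    eventually_ne_atTop 0] with N hN hN0
  have hsin : sin (arccos (x N)) ≠ 0 := by
    rw [sin_arccos]
    exact sqrt_ne_zero'.2 (by nlinarith [hN.1, hN.2])
  rw [Pi.div_apply, Function.comp_apply, Function.comp_apply, ← U_sub_one_real_cos_div hN0 hsin,
    cos_arccos hN.1.le hN.2.le]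

end ChebyshevLimit

/-- In the continuum limit, for `E₀ < E < V` with `ϑ = √(E−E₀)`,
`(U_{N−1}(Φ_N)/N)² → sin²(ϑL)/(ϑL)²`. -/
theorem KP_chebyshev_asymptotics (γ L E V : ℝ) (hγ : 0 < γ) (hL : 0 < L)
    (hV : 0 < V) (k z E₀ ϑ : ℝ)
    (hE₀ : E₀ = γ * V / (1 + γ)) (hE : E₀ < E) (hEV : E < V)
    (hk : k = Real.sqrt E) (hz : z = Real.sqrt (V - E)) (hϑ : ϑ = Real.sqrt (E - E₀))
    (δ lam Φ : ℕ → ℝ)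
    (hδ : ∀ N, δ N = L / ((1 + γ) * N)) (hlam : ∀ N, lam N = γ * L / ((1 + γ) * N))
    (hΦ : ∀ N, Φ N = Real.cos (k * δ N) * Real.cosh (z * lam N)
        + (z ^ 2 - k ^ 2) / (2 * k * z) * Real.sin (k * δ N) * Real.sinh (z * lam N)) :
    Tendsto (fun N : ℕ => ((U ℝ ((N : ℤ) - 1)).eval (Φ N) / (N : ℝ)) ^ 2) atTop
      (nhds (Real.sin (ϑ * L) ^ 2 / (ϑ * L) ^ 2)) := by
  have hEpos : 0 < E := (hE₀ ▸ by positivity : 0 < E₀).trans hE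
  have hk0 : k ≠ 0 := (hk ▸ sqrt_pos.2 hEpos).ne'
  have hz0 : z ≠ 0 := (hz ▸ sqrt_pos.2 (sub_pos.2 hEV)).ne'
  have hϑL : 0 < ϑ * L := mul_pos (hϑ ▸ sqrt_pos.2 (sub_pos.2 hE)) hL
  set a := k * L / (1 + γ)
  set b := γ * z * L / (1 + γ)
  set c := (z ^ 2 - k ^ 2) / (2 * k * z)
  have hkδ : ∀ N : ℕ, k * δ N = a * (N : ℝ)⁻¹ := fun N => by
    rw [hδ, ← div_div]; simp only [a]; ring
  have hzlam : ∀ N : ℕ, z * lam N = b * (N : ℝ)⁻¹ := fun N => by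
    rw [hlam, ← div_div]; simp only [b]; ring
  have hlimit : (a ^ 2 - b ^ 2) / 2 - c * a * b = (ϑ * L) ^ 2 / 2 := by
    have hk2 : k ^ 2 = E := hk ▸ sq_sqrt hEpos.le
    have hz2 : z ^ 2 = V - E := hz ▸ sq_sqrt (sub_pos.2 hEV).le
    have hϑ2 : ϑ ^ 2 = E - E₀ := hϑ ▸ sq_sqrt (sub_pos.2 hE).le
    have hE₀' : E₀ * (1 + γ) = γ * V := (eq_div_iff (by positivity)).1 hE₀
    simp only [a, b, c]
    field_simp
    linear_combination (1 + γ) * hk2 - γ * (1 + γ) * hz2 - (1 + γ) ^ 2 * hϑ2 + (1 + γ) * hE₀'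
  have hcontact : Tendsto (fun N : ℕ => (N : ℝ) ^ 2 * (1 - Φ N)) atTop (𝓝 ((ϑ * L) ^ 2 / 2)) := by
    have hinv : Tendsto (fun N : ℕ => (N : ℝ)⁻¹) atTop (𝓝[≠] 0) :=
      (tendsto_inv_atTop_nhdsGT_zero.comp tendsto_natCast_atTop_atTop).mono_right
        (nhdsGT_le_nhdsNE 0)
    rw [← hlimit]
    refine ((tendsto_one_sub_cos_mul_cosh_add_sin_mul_sinh_div_sq a b c).comp hinv).congr
      fun N => ?_
    rw [Function.comp_apply, hΦ, hkδ, hzlam, inv_pow, div_inv_eq_mul, mul_comm]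
  have h := (tendsto_U_sub_one_eval_div_of_tendsto_sq_mul_one_sub hϑL hcontact).pow 2
  rwa [sinc_of_ne_zero hϑL.ne', div_pow] at h
end

section
/- Fix γ, L > 0 and reals E, V with E₀ < E < V where E₀ = γV/(1+γ). With δ_N = L/((1+γ)N), λ_N = γL/((1+γ)N), k = √E, z = √(V−E), Φ_N as the real part of the (1,1) entry of the single-cell transfer matrix, and S_N = [1 + ((V/(2kz))·sinh(zλ_N)·U_{N−1}(Φ_N))²]^{−1}, the sequence S_N converges as N → ∞ to S̄ = [1 + (E₀²/(4E))·(sin(L√(E−E₀))/√(E−E₀))²]^{−1}. -/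
/-! Writing `Φ_N = cos θ_N`, the half-angle identities give `N² (1 - Φ_N) → (E - E₀) L² / 2`,
hence `N θ_N → L √(E - E₀)`. Since `U_{N-1}(cos θ) sin θ = sin (N θ)`, this yields
`U_{N-1}(Φ_N) / N → sinc (L √(E - E₀))`, while `N sinh (z λ_N) → z γ L / (1 + γ)`; so the
amplitude in `S_N` tends to `(E₀ / (2k)) sin (L √(E - E₀)) / √(E - E₀)`. -/

open Real Filter Polynomial Polynomial.Chebyshev Topology

theorem tendsto_nat_mul_sub_of_hasDerivAt {f : ℝ → ℝ} {f' : ℝ} (hf : HasDerivAt f f' 0)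
    (m : ℝ) : Tendsto (fun N : ℕ => (N : ℝ) * (f (m / N) - f 0)) atTop (𝓝 (m * f')) := by
  have hslope : Tendsto (fun N : ℕ => dslope f 0 (m / N)) atTop (𝓝 f') := by
    have hcont : ContinuousAt (dslope f 0) 0 := continuousAt_dslope_same.mpr hf.differentiableAt
    rw [← hf.deriv, ← dslope_same]
    exact hcont.tendsto.comp (tendsto_const_div_atTop_nhds_zero_nat m)
  refine (hslope.const_mul m).congr' ?_
  filter_upwards [eventually_ne_atTop 0] with N hN
  have h := sub_smul_dslope f 0 (m / N)
  rw [sub_zero, smul_eq_mul] at h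
  rw [← h]
  field_simp

theorem tendsto_nat_mul_sin_div (m : ℝ) :
    Tendsto (fun N : ℕ => (N : ℝ) * sin (m / N)) atTop (𝓝 m) := by
  simpa using tendsto_nat_mul_sub_of_hasDerivAt (hasDerivAt_sin 0) m

theorem tendsto_nat_mul_sinh_div (m : ℝ) :
    Tendsto (fun N : ℕ => (N : ℝ) * sinh (m / N)) atTop (𝓝 m) := by
  simpa using tendsto_nat_mul_sub_of_hasDerivAt (hasDerivAt_sinh 0) m

theorem one_sub_cos_eq_two_mul_sin_sq_half (t : ℝ) : 1 - cos t = 2 * sin (t / 2) ^ 2 := by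
  have h := cos_two_mul' (t / 2)
  rw [mul_div_cancel₀ t two_ne_zero] at h
  linear_combination -h - sin_sq_add_cos_sq (t / 2)

theorem cosh_sub_one_eq_two_mul_sinh_sq_half (t : ℝ) : cosh t - 1 = 2 * sinh (t / 2) ^ 2 := by
  have h := cosh_two_mul (t / 2)
  rw [mul_div_cancel₀ t two_ne_zero] at h
  linear_combination h + cosh_sq (t / 2)

theorem tendsto_nat_sq_mul_one_sub_cos_div (p : ℝ) :
    Tendsto (fun N : ℕ => (N : ℝ) ^ 2 * (1 - cos (p / N))) atTop (𝓝 (p ^ 2 / 2)) := by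
  have h := ((tendsto_nat_mul_sin_div (p / 2)).pow 2).const_mul 2
  convert h using 2 with N
  · rw [one_sub_cos_eq_two_mul_sin_sq_half]; ring_nf
  · ring

theorem tendsto_nat_sq_mul_cosh_div_sub_one (q : ℝ) :
    Tendsto (fun N : ℕ => (N : ℝ) ^ 2 * (cosh (q / N) - 1)) atTop (𝓝 (q ^ 2 / 2)) := by
  have h := ((tendsto_nat_mul_sinh_div (q / 2)).pow 2).const_mul 2
  convert h using 2 with N
  · rw [cosh_sub_one_eq_two_mul_sinh_sq_half]; ring_nf
  · ring

theorem tendsto_nat_sq_mul_one_sub_cos_mul_cosh_add (p q r : ℝ) :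
    Tendsto (fun N : ℕ => (N : ℝ) ^ 2 *
      (1 - (cos (p / N) * cosh (q / N) + r * sin (p / N) * sinh (q / N))))
      atTop (𝓝 ((p ^ 2 - q ^ 2) / 2 - r * p * q)) := by
  have hcosh : Tendsto (fun N : ℕ => cosh (q / N)) atTop (𝓝 1) := by
    simpa [Function.comp_def] using
      (continuous_cosh.tendsto 0).comp (tendsto_const_div_atTop_nhds_zero_nat q)
  have h := (((tendsto_nat_sq_mul_one_sub_cos_div p).mul hcosh).sub
    (tendsto_nat_sq_mul_cosh_div_sub_one q)).sub
    (((tendsto_nat_mul_sin_div p).mul (tendsto_nat_mul_sinh_div q)).const_mul r)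
  convert h using 2 with N
  · ring
  · ring

theorem Real.mul_sinc (x : ℝ) : x * sinc x = sin x := by
  simpa [sinc_eq_dslope] using sub_smul_dslope sin 0 x

-- Phrased with `sinc` so that it holds at `θ = 0` as well.
theorem Polynomial.Chebyshev.U_eval_cos_mul_sinc (θ : ℝ) (n : ℕ) :
    (U ℝ ((n : ℤ) - 1)).eval (cos θ) * sinc θ = n * sinc (n * θ) := by
  rcases eq_or_ne θ 0 with rfl | hθ
  · simp [U_eval_one]
  · apply mul_left_cancel₀ hθ
    have h := U_real_cos θ ((n : ℤ) - 1)
    push_cast at h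
    rw [sub_add_cancel] at h
    calc θ * ((U ℝ ((n : ℤ) - 1)).eval (cos θ) * sinc θ)
        = (U ℝ ((n : ℤ) - 1)).eval (cos θ) * sin θ := by rw [← mul_sinc θ]; ring
      _ = θ * (n * sinc (n * θ)) := by rw [h, ← mul_sinc (n * θ)]; ring

theorem tendsto_one_of_tendsto_nat_sq_mul_one_sub {x : ℕ → ℝ} {a : ℝ}
    (hx : Tendsto (fun N : ℕ => (N : ℝ) ^ 2 * (1 - x N)) atTop (𝓝 a)) :
    Tendsto x atTop (𝓝 1) := by
  have h := hx.mul ((tendsto_inv_atTop_nhds_zero_nat (𝕜 := ℝ)).pow 2)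
  rw [zero_pow two_ne_zero, mul_zero] at h
  have h' : Tendsto (fun N : ℕ => 1 - x N) atTop (𝓝 0) := by
    refine h.congr' ?_
    filter_upwards [eventually_ne_atTop 0] with N hN
    field_simp
  simpa using (tendsto_const_nhds (x := (1 : ℝ))).sub h'

theorem tendsto_sinc_arccos {α : Type*} {l : Filter α} {x : α → ℝ}
    (hx : Tendsto x l (𝓝 1)) : Tendsto (fun i => sinc (arccos (x i))) l (𝓝 1) := by
  have h := (continuous_sinc.comp continuous_arccos).tendsto 1
  rw [Function.comp_apply, arccos_one, sinc_zero] at h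
  exact h.comp hx

theorem tendsto_nat_mul_arccos {x : ℕ → ℝ} {c : ℝ}
    (hx : Tendsto (fun N : ℕ => (N : ℝ) ^ 2 * (1 - x N)) atTop (𝓝 (c ^ 2 / 2))) :
    Tendsto (fun N : ℕ => (N : ℝ) * arccos (x N)) atTop (𝓝 |c|) := by
  have hx1 := tendsto_one_of_tendsto_nat_sq_mul_one_sub hx
  have hsin : Tendsto (fun N : ℕ => (N : ℝ) * sin (arccos (x N))) atTop (𝓝 |c|) := by
    have h := (continuous_sqrt.tendsto _).comp
      (hx.mul (tendsto_const_nhds (x := (1 : ℝ)).add hx1))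
    rw [show c ^ 2 / 2 * (1 + 1) = c ^ 2 by ring, sqrt_sq_eq_abs] at h
    refine h.congr fun N => ?_
    rw [Function.comp_apply, sin_arccos, ← sqrt_sq (Nat.cast_nonneg N),
      ← sqrt_mul (sq_nonneg _), sqrt_sq (Nat.cast_nonneg N)]
    ring_nf
  have hsinc := tendsto_sinc_arccos hx1
  refine (div_one |c| ▸ hsin.div hsinc one_ne_zero).congr' ?_
  filter_upwards [hsinc.eventually_ne one_ne_zero] with N hN
  rw [Pi.div_apply, ← mul_sinc, ← mul_assoc, mul_div_cancel_right₀ _ hN]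

theorem tendsto_U_eval_div_nat {x : ℕ → ℝ} {c : ℝ} (hc : c ≠ 0)
    (hx : Tendsto (fun N : ℕ => (N : ℝ) ^ 2 * (1 - x N)) atTop (𝓝 (c ^ 2 / 2))) :
    Tendsto (fun N : ℕ => (U ℝ ((N : ℤ) - 1)).eval (x N) / N) atTop (𝓝 (sinc c)) := by
  have hx1 := tendsto_one_of_tendsto_nat_sq_mul_one_sub hx
  have hsinc := tendsto_sinc_arccos hx1
  have hle : ∀ᶠ N : ℕ in atTop, x N ≤ 1 := by
    filter_upwards [hx.eventually (eventually_gt_nhds (by positivity))] with N hN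
    nlinarith [sq_nonneg (N : ℝ)]
  have hcos : ∀ᶠ N : ℕ in atTop, cos (arccos (x N)) = x N := by
    filter_upwards [hle, hx1.eventually (eventually_ge_nhds (by norm_num : (-1 : ℝ) < 1))]
      with N h1 h2
    exact cos_arccos h2 h1
  have habs : sinc |c| = sinc c := by
    rcases abs_choice c with h | h <;> rw [h]
    exact sinc_neg c
  rw [← habs, ← div_one (sinc |c|)]
  refine (((continuous_sinc.tendsto _).comp (tendsto_nat_mul_arccos hx)).div hsinc
    one_ne_zero).congr' ?_
  filter_upwards [hcos, hsinc.eventually_ne one_ne_zero, eventually_ne_atTop 0]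
    with N hcosN hsincN hN
  have h := U_eval_cos_mul_sinc (arccos (x N)) N
  rw [hcosN] at h
  rw [Pi.div_apply, Function.comp_apply, eq_div_iff (Nat.cast_ne_zero.mpr hN),
    div_mul_eq_mul_div, div_eq_iff hsincN, h, mul_comm]

theorem kronigPenney_trace_coeff {γ L E V E₀ k z : ℝ} (hγ : 1 + γ ≠ 0) (hk : k ≠ 0)
    (hz : z ≠ 0) (hk2 : k ^ 2 = E) (hz2 : z ^ 2 = V - E) (hE₀ : E₀ = γ * V / (1 + γ)) :
    ((k * (L / (1 + γ))) ^ 2 - (z * (γ * L / (1 + γ))) ^ 2) / 2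
      - (z ^ 2 - k ^ 2) / (2 * k * z) * (k * (L / (1 + γ))) * (z * (γ * L / (1 + γ)))
      = (E - E₀) * L ^ 2 / 2 := by
  field_simp
  rw [hk2, hz2, hE₀]
  field_simp
  ring

/-- Continuum limit of the transmission coefficient: for `E₀ < E < V`,
`S_N → [1 + (E₀²/(4E))(sin(L√(E−E₀))/√(E−E₀))²]⁻¹`. -/
theorem KP_transmission_continuum_limit (γ L E V : ℝ) (hγ : 0 < γ) (hL : 0 < L)
    (hV : 0 < V) (k z E₀ : ℝ)
    (hE₀ : E₀ = γ * V / (1 + γ)) (hE : E₀ < E) (hEV : E < V)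
    (hk : k = Real.sqrt E) (hz : z = Real.sqrt (V - E))
    (δ lam Φ S : ℕ → ℝ)
    (hδ : ∀ N, δ N = L / ((1 + γ) * N)) (hlam : ∀ N, lam N = γ * L / ((1 + γ) * N))
    (hΦ : ∀ N, Φ N = Real.cos (k * δ N) * Real.cosh (z * lam N)
        + (z ^ 2 - k ^ 2) / (2 * k * z) * Real.sin (k * δ N) * Real.sinh (z * lam N))
    (hS : ∀ N, S N = (1 + (V / (2 * k * z) * Real.sinh (z * lam N)
        * (U ℝ ((N : ℤ) - 1)).eval (Φ N)) ^ 2)⁻¹) :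
    Tendsto S atTop (nhds ((1 + E₀ ^ 2 / (4 * E)
      * (Real.sin (L * Real.sqrt (E - E₀)) / Real.sqrt (E - E₀)) ^ 2)⁻¹)) := by
  have hE₀pos : 0 < E₀ := by rw [hE₀]; positivity
  have hk2 : k ^ 2 = E := by rw [hk, sq_sqrt (hE₀pos.trans hE).le]
  have hz2 : z ^ 2 = V - E := by rw [hz, sq_sqrt (sub_pos.mpr hEV).le]
  have hk0 : k ≠ 0 := by rw [hk]; exact (sqrt_pos.mpr (hE₀pos.trans hE)).ne'
  have hz0 : z ≠ 0 := by rw [hz]; exact (sqrt_pos.mpr (sub_pos.mpr hEV)).ne'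
  set w := sqrt (E - E₀)
  have hw2 : w ^ 2 = E - E₀ := sq_sqrt (sub_pos.mpr hE).le
  have hw0 : w ≠ 0 := (sqrt_pos.mpr (sub_pos.mpr hE)).ne'
  set p := k * (L / (1 + γ)) with hp
  set q := z * (γ * L / (1 + γ)) with hq
  have hkδ : ∀ N : ℕ, k * δ N = p / N := fun N => by rw [hδ, hp, div_mul_eq_div_div]; ring
  have hzlam : ∀ N : ℕ, z * lam N = q / N := fun N => by rw [hlam, hq, div_mul_eq_div_div]; ring
  have hΦlim :
      Tendsto (fun N : ℕ => (N : ℝ) ^ 2 * (1 - Φ N)) atTop (𝓝 ((w * L) ^ 2 / 2)) := by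
    rw [mul_pow, hw2, ← kronigPenney_trace_coeff (by positivity) hk0 hz0 hk2 hz2 hE₀]
    refine (tendsto_nat_sq_mul_one_sub_cos_mul_cosh_add p q _).congr fun N => ?_
    rw [hΦ, hkδ, hzlam]
  have hsinh : Tendsto (fun N : ℕ => (N : ℝ) * sinh (z * lam N)) atTop (𝓝 q) := by
    simpa only [hzlam] using tendsto_nat_mul_sinh_div q
  have hamp : Tendsto (fun N : ℕ => V / (2 * k * z) * sinh (z * lam N)
      * (U ℝ ((N : ℤ) - 1)).eval (Φ N)) atTop (𝓝 (V / (2 * k * z) * q * sinc (w * L))) := by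
    have h := (hsinh.mul (tendsto_U_eval_div_nat (mul_ne_zero hw0 hL.ne') hΦlim)).const_mul
      (V / (2 * k * z))
    rw [← mul_assoc] at h
    refine h.congr' ?_
    filter_upwards [eventually_ne_atTop 0] with N hN
    field_simp
  have hval : V / (2 * k * z) * q * sinc (w * L) = E₀ / (2 * k) * (sin (L * w) / w) := by
    rw [sinc_of_ne_zero (mul_ne_zero hw0 hL.ne'), mul_comm w L, hE₀, hq]
    field_simp
  have h4E : (2 * k) ^ 2 = 4 * E := by rw [mul_pow, hk2]; norm_num
  convert ((hamp.pow 2).const_add 1).inv₀ (by positivity) using 3 with N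
  · exact hS N
  · rw [hval, ← h4E]
    ring
end

section
/- Fix γ, L, V > 0 and E₀ = γV/(1+γ), and let 0 < E < E₀ (so E < V). With the notations δ_N = L/((1+γ)N), λ_N = γL/((1+γ)N), k = √E, z = √(V−E), and Φ_N = cos(kδ_N)cosh(zλ_N) + ((z²−k²)/(2kz))sin(kδ_N)sinh(zλ_N), there exists N₀ such that Φ_N > 1 for all N ≥ N₀. -/
/-!
Write `s = δ_N`, so that `z λ_N = γ z s`. With `ζ = k + iγz`, `Φ_N = Re cos(ζs) - c Im cos(ζs)`
for `c = (z² - k²)/(2kz)`, and the complex estimate `cos x = 1 - x²/2 + O(x⁴)` gives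
`Φ_N = 1 + q s² + O(s⁴)` with `q = (1 + γ)(γz² - k²)/2 = (1 + γ)(γV - (1 + γ)E)/2`.
Below the threshold `E₀` this coefficient is positive, so `Φ_N > 1` once `s = δ_N` is small.
-/

open Real Filter Topology Asymptotics

lemma Complex.re_cos_add_mul_I (a b : ℝ) :
    (Complex.cos (a + b * Complex.I)).re = Real.cos a * Real.cosh b := by
  simp [Complex.cos_add_mul_I, Complex.cos_ofReal_re, Complex.cosh_ofReal_re]

lemma Complex.im_cos_add_mul_I (a b : ℝ) :
    (Complex.cos (a + b * Complex.I)).im = -(Real.sin a * Real.sinh b) := by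
  simp [Complex.cos_add_mul_I, Complex.sin_ofReal_re, Complex.sinh_ofReal_re]

lemma Complex.cos_sub_one_sub_sq_div_two_isBigO :
    (fun x : ℂ => Complex.cos x - (1 - x ^ 2 / 2)) =O[𝓝 0] fun x => x ^ 4 := by
  refine .of_bound (5 / 96) ?_
  filter_upwards [Metric.closedBall_mem_nhds (0 : ℂ) one_pos] with x hx
  rw [mem_closedBall_zero_iff] at hx
  simpa [mul_comm] using Complex.cos_bound hx

lemma cos_mul_cosh_add_mul_sin_mul_sinh_isBigO (k w c : ℝ) :
    (fun s => cos (k * s) * cosh (w * s) + c * sin (k * s) * sinh (w * s)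
      - (1 + ((w ^ 2 - k ^ 2) / 2 + c * k * w) * s ^ 2)) =O[𝓝 0] fun s => s ^ 4 := by
  set ζ : ℂ := k + w * Complex.I
  have hζ : Tendsto (fun s : ℝ => ζ * s) (𝓝 0) (𝓝 0) := by
    simpa using (tendsto_const_nhds (x := ζ)).mul (Complex.continuous_ofReal.tendsto (0 : ℝ))
  have hR : (fun s : ℝ => Complex.cos (ζ * s) - (1 - (ζ * s) ^ 2 / 2)) =O[𝓝 0] fun s => s ^ 4 := by
    refine (Complex.cos_sub_one_sub_sq_div_two_isBigO.comp_tendsto hζ).trans ?_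
    refine .of_bound (‖ζ‖ ^ 4) (.of_forall fun s => ?_)
    simp [mul_pow]
  refine (((Complex.reCLM.isBigO_comp _ _).sub
    ((Complex.imCLM.isBigO_comp _ _).const_mul_left c)).trans hR).congr_left fun s => ?_
  have hζs : ζ * s = ↑(k * s) + ↑(w * s) * Complex.I := by push_cast; ring
  simp only [Complex.reCLM_apply, Complex.imCLM_apply, Complex.sub_re, Complex.sub_im, hζs,
    Complex.re_cos_add_mul_I, Complex.im_cos_add_mul_I]
  simp [sq]
  ring

lemma eventually_lt_of_sub_add_mul_sq_isBigO {f : ℝ → ℝ} {a q : ℝ} (hq : 0 < q)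
    (hf : (fun s => f s - (a + q * s ^ 2)) =O[𝓝 0] fun s => s ^ 4) :
    ∀ᶠ s in 𝓝[≠] 0, a < f s := by
  have hsmall := (hf.trans_isLittleO (isLittleO_pow_pow (by norm_num : 2 < 4))).def (half_pos hq)
  filter_upwards [nhdsWithin_le_nhds hsmall, self_mem_nhdsWithin] with s hs hs0
  have hs2 : 0 < s ^ 2 := pow_pos (abs_pos.2 hs0) 2 |>.trans_eq (sq_abs s)
  rw [Real.norm_eq_abs, Real.norm_eq_abs, abs_of_pos hs2, abs_le] at hs
  nlinarith

theorem KP_phi_eventually_gt_one_general (γ L E V : ℝ) (hγ : 0 < γ) (hL : 0 < L)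
    (E₀ : ℝ) (hE₀ : E₀ = γ * V / (1 + γ)) (hE : 0 < E) (hEE₀ : E < E₀)
    (k z : ℝ) (hk : k = Real.sqrt E) (hz : z = Real.sqrt (V - E))
    (δ lam Φ : ℕ → ℝ)
    (hδ : ∀ N, δ N = L / ((1 + γ) * N)) (hlam : ∀ N, lam N = γ * L / ((1 + γ) * N))
    (hΦ : ∀ N, Φ N = Real.cos (k * δ N) * Real.cosh (z * lam N)
        + (z ^ 2 - k ^ 2) / (2 * k * z) * Real.sin (k * δ N) * Real.sinh (z * lam N)) :
    ∃ N₀ : ℕ, ∀ N ≥ N₀, 1 < Φ N := by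
  have hγ1 : 0 < 1 + γ := by linarith
  have hEV : E < γ * (V - E) := by rw [hE₀, lt_div_iff₀ hγ1] at hEE₀; linarith
  have hVE : 0 < V - E := pos_of_mul_pos_right (hE.trans hEV) hγ.le
  have hk2 : k ^ 2 = E := hk ▸ Real.sq_sqrt hE.le
  have hz2 : z ^ 2 = V - E := hz ▸ Real.sq_sqrt hVE.le
  have hk0 : k ≠ 0 := (hk ▸ Real.sqrt_pos.2 hE).ne'
  have hz0 : z ≠ 0 := (hz ▸ Real.sqrt_pos.2 hVE).ne'
  have hq : 0 < ((γ * z) ^ 2 - k ^ 2) / 2 + (z ^ 2 - k ^ 2) / (2 * k * z) * k * (γ * z) := by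
    have hq_eq : ((γ * z) ^ 2 - k ^ 2) / 2 + (z ^ 2 - k ^ 2) / (2 * k * z) * k * (γ * z)
        = (1 + γ) * (γ * z ^ 2 - k ^ 2) / 2 := by field_simp; ring
    rw [hq_eq, hk2, hz2]
    exact half_pos (mul_pos hγ1 (by linarith))
  have hδ0 : Tendsto δ atTop (𝓝[≠] 0) := by
    refine tendsto_nhdsWithin_iff.2 ⟨?_, ?_⟩
    · simpa [funext hδ, div_div] using tendsto_const_div_atTop_nhds_zero_nat (L / (1 + γ))
    · filter_upwards [eventually_gt_atTop 0] with N hN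
      rw [hδ]
      exact (div_pos hL (mul_pos hγ1 (Nat.cast_pos.2 hN))).ne'
  obtain ⟨N₀, hN₀⟩ := eventually_atTop.1 <| hδ0.eventually <|
    eventually_lt_of_sub_add_mul_sq_isBigO hq (cos_mul_cosh_add_mul_sin_mul_sinh_isBigO k (γ * z) _)
  refine ⟨N₀, fun N hN => ?_⟩
  have hlamδ : z * lam N = γ * z * δ N := by rw [hlam, hδ]; ring
  rw [hΦ, hlamδ]
  exact hN₀ N hN

/-- For energies below the threshold `E₀ = γV/(1+γ)`, the half-trace `Φ_N` of the
rescaled single-cell Kronig–Penney transfer matrix eventually exceeds 1. -/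
theorem KP_phi_eventually_gt_one (γ L E V : ℝ) (hγ : 0 < γ) (hL : 0 < L) (hV : 0 < V)
    (E₀ : ℝ) (hE₀ : E₀ = γ * V / (1 + γ)) (hE : 0 < E) (hEE₀ : E < E₀)
    (k z : ℝ) (hk : k = Real.sqrt E) (hz : z = Real.sqrt (V - E))
    (δ lam Φ : ℕ → ℝ)
    (hδ : ∀ N, δ N = L / ((1 + γ) * N)) (hlam : ∀ N, lam N = γ * L / ((1 + γ) * N))
    (hΦ : ∀ N, Φ N = Real.cos (k * δ N) * Real.cosh (z * lam N)
        + (z ^ 2 - k ^ 2) / (2 * k * z) * Real.sin (k * δ N) * Real.sinh (z * lam N)) :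
    ∃ N₀ : ℕ, ∀ N ≥ N₀, 1 < Φ N :=
  KP_phi_eventually_gt_one_general γ L E V hγ hL E₀ hE₀ hE hEE₀ k z hk hz δ lam Φ hδ hlam hΦ
end

section
/- Fix γ, L, V > 0 and E₀ = γV/(1+γ). Let ξ be a real number and define E(ξ) = E₀ + ξ². Then for the sequences δ_N = L/((1+γ)N), λ_N = γL/((1+γ)N), p_N = δ_N + λ_N = L/N, with k_N = √(E(ξ)) and z_N = √(V − E(ξ)) (assuming E(ξ) < V), the dispersion defect D_N := [cos(k_N δ_N)cosh(z_N λ_N) + ((z_N²−k_N²)/(2 k_N z_N))sin(k_N δ_N)sinh(z_N λ_N)] − cos(ξ p_N) satisfies N²·D_N → 0 as N → ∞. -/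
/-!
Put `t = L/N`, `a = k/(1+γ)`, `b = γz/(1+γ)` and `c = (z²-k²)/(2kz)`. Then `D_N = f(t)` with
`f(t) = cos(at) cosh(bt) + c sin(at) sinh(bt) - cos(ξt)`. Here `f(0) = f'(0) = 0` and
`f''(0) = b² - a² + 2abc + ξ² = (γz² - k²)/(1+γ) + ξ²`, which vanishes precisely because
`k² = E₀ + ξ²`, `z² = V - E₀ - ξ²` and `(1+γ)E₀ = γV`. So `f(t) = o(t²)`, i.e. `N² D_N → 0`.
-/

open Real Filter Asymptotics Topology

theorem isLittleO_sq_of_hasDerivAt {𝕜 G : Type*} [RCLike 𝕜] [NormedAddCommGroup G]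
    [NormedSpace 𝕜 G] {f g : 𝕜 → G} (hf : ∀ᶠ t in 𝓝 0, HasDerivAt f (g t) t) (hf0 : f 0 = 0)
    (hg : g =o[𝓝 0] fun t => t) : f =o[𝓝 0] fun t => t ^ 2 := by
  refine IsLittleO.of_bound fun ε hε => ?_
  -- on the closed ball of radius `‖t‖` the derivative is at most `ε‖t‖`, so `‖f t‖ ≤ ε‖t‖²`
  obtain ⟨r, hr, hball⟩ := Metric.eventually_nhds_iff_ball.1 (hf.and (hg.bound hε))
  filter_upwards [Metric.ball_mem_nhds 0 hr] with t ht
  have hsub : Metric.closedBall (0 : 𝕜) ‖t‖ ⊆ Metric.ball 0 r :=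
    Metric.closedBall_subset_ball (by simpa using ht)
  have hmvt := Convex.norm_image_sub_le_of_norm_hasDerivWithin_le
    (s := Metric.closedBall 0 ‖t‖)
    (fun x hx => (hball x (hsub hx)).1.hasDerivWithinAt)
    (fun x hx => (hball x (hsub hx)).2.trans
      (mul_le_mul_of_nonneg_left (mem_closedBall_zero_iff.1 hx) hε.le))
    (convex_closedBall 0 ‖t‖) (Metric.mem_closedBall_self (norm_nonneg t))
    (mem_closedBall_zero_iff.2 le_rfl)
  simpa [hf0, sq, mul_assoc] using hmvt

noncomputable def kronigPenneyDefect (a b c ξ t : ℝ) : ℝ :=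
  cos (a * t) * cosh (b * t) + c * sin (a * t) * sinh (b * t) - cos (ξ * t)

noncomputable def kronigPenneyDefectDeriv (a b c ξ t : ℝ) : ℝ :=
  (c * b - a) * (sin (a * t) * cosh (b * t)) + (b + c * a) * (cos (a * t) * sinh (b * t))
    + ξ * sin (ξ * t)

section
variable (a b c ξ : ℝ)

theorem hasDerivAt_kronigPenneyDefect (t : ℝ) :
    HasDerivAt (kronigPenneyDefect a b c ξ) (kronigPenneyDefectDeriv a b c ξ t) t :=
  ((((hasDerivAt_const_mul a).cos.mul (hasDerivAt_const_mul b).cosh).add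
    (((hasDerivAt_const_mul a).sin.const_mul c).mul (hasDerivAt_const_mul b).sinh)).sub
    (hasDerivAt_const_mul ξ).cos).congr_deriv (by rw [kronigPenneyDefectDeriv]; ring)

theorem hasDerivAt_kronigPenneyDefectDeriv_zero :
    HasDerivAt (kronigPenneyDefectDeriv a b c ξ) (b ^ 2 - a ^ 2 + 2 * a * b * c + ξ ^ 2) 0 := by
  have hsc : HasDerivAt (fun t => sin (a * t) * cosh (b * t)) a 0 :=
    ((hasDerivAt_const_mul a).sin.mul (hasDerivAt_const_mul b).cosh).congr_deriv (by simp)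
  have hcs : HasDerivAt (fun t => cos (a * t) * sinh (b * t)) b 0 :=
    ((hasDerivAt_const_mul a).cos.mul (hasDerivAt_const_mul b).sinh).congr_deriv (by simp)
  have hs : HasDerivAt (fun t => sin (ξ * t)) ξ 0 :=
    (hasDerivAt_const_mul ξ).sin.congr_deriv (by simp)
  exact (((hsc.const_mul (c * b - a)).add (hcs.const_mul (b + c * a))).add
    (hs.const_mul ξ)).congr_deriv (by ring)

theorem kronigPenneyDefect_isLittleO (h : b ^ 2 - a ^ 2 + 2 * a * b * c + ξ ^ 2 = 0) :
    kronigPenneyDefect a b c ξ =o[𝓝 0] fun t => t ^ 2 := by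
  refine isLittleO_sq_of_hasDerivAt (.of_forall (hasDerivAt_kronigPenneyDefect a b c ξ))
    (by simp [kronigPenneyDefect]) ?_
  have hderiv := hasDerivAt_kronigPenneyDefectDeriv_zero a b c ξ
  rw [h, hasDerivAt_iff_isLittleO_nhds_zero] at hderiv
  exact hderiv.congr_left fun t => by simp [kronigPenneyDefectDeriv]

end

theorem tendsto_nat_sq_mul_comp_div_of_isLittleO {f : ℝ → ℝ} (hf : f =o[𝓝 0] fun t => t ^ 2)
    (L : ℝ) : Tendsto (fun N : ℕ => (N : ℝ) ^ 2 * f (L / N)) atTop (𝓝 0) := by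
  have hcomp : (fun N : ℕ => f (L / N)) =o[atTop] fun N : ℕ => (L / N) ^ 2 :=
    hf.comp_tendsto (tendsto_const_div_atTop_nhds_zero_nat L)
  have hscale : (fun N : ℕ => (L / N) ^ 2) =O[atTop] fun N : ℕ => ((N : ℝ) ^ 2)⁻¹ :=
    ((isBigO_refl _ _).const_mul_left (L ^ 2)).congr_left fun N => by ring
  exact (hcomp.trans_isBigO hscale).tendsto_div_nhds_zero.congr fun N => by
    rw [div_inv_eq_mul, mul_comm]

theorem KP_dispersion_continuum_limit_general (γ L V : ℝ) (hγ : 0 < γ) (hV : 0 < V)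
    (E₀ : ℝ) (hE₀ : E₀ = γ * V / (1 + γ)) (ξ : ℝ) (hξ : E₀ + ξ ^ 2 < V)
    (k z : ℝ) (hk : k = Real.sqrt (E₀ + ξ ^ 2)) (hz : z = Real.sqrt (V - E₀ - ξ ^ 2))
    (δ lam p D : ℕ → ℝ)
    (hδ : ∀ N, δ N = L / ((1 + γ) * N)) (hlam : ∀ N, lam N = γ * L / ((1 + γ) * N))
    (hp : ∀ N, p N = L / N)
    (hD : ∀ N, D N = (Real.cos (k * δ N) * Real.cosh (z * lam N)
        + (z ^ 2 - k ^ 2) / (2 * k * z) * Real.sin (k * δ N) * Real.sinh (z * lam N))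
      - Real.cos (ξ * p N)) :
    Tendsto (fun N : ℕ => (N : ℝ) ^ 2 * D N) atTop (nhds 0) := by
  have hE₀pos : 0 < E₀ := hE₀ ▸ by positivity
  have hk2 : k ^ 2 = E₀ + ξ ^ 2 := hk ▸ sq_sqrt (by positivity)
  have hz2 : z ^ 2 = V - E₀ - ξ ^ 2 := hz ▸ sq_sqrt (by linarith)
  have hk0 : k ≠ 0 := hk ▸ (sqrt_pos.2 (by positivity)).ne'
  have hz0 : z ≠ 0 := hz ▸ (sqrt_pos.2 (by linarith)).ne'
  set a := k / (1 + γ)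
  set b := γ * z / (1 + γ)
  set c := (z ^ 2 - k ^ 2) / (2 * k * z)
  have hdisp : b ^ 2 - a ^ 2 + 2 * a * b * c + ξ ^ 2 = 0 := by
    have h1γ : 1 + γ ≠ 0 := by positivity
    simp only [a, b, c]
    field_simp
    rw [hk2, hz2, hE₀]
    field_simp
    ring
  have hDN : ∀ N, D N = kronigPenneyDefect a b c ξ (L / N) := fun N => by
    have hka : k * (L / ((1 + γ) * N)) = a * (L / N) := by
      simp only [a, div_eq_mul_inv, mul_inv]; ring
    have hzb : z * (γ * L / ((1 + γ) * N)) = b * (L / N) := by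
      simp only [b, div_eq_mul_inv, mul_inv]; ring
    rw [hD, hδ, hlam, hp, hka, hzb, kronigPenneyDefect]
  simpa only [hDN] using
    tendsto_nat_sq_mul_comp_div_of_isLittleO (kronigPenneyDefect_isLittleO a b c ξ hdisp) L

/-- The continuum-limit dispersion relation `E(ξ) = E₀ + ξ²`: the dispersion defect
`D_N = Φ_N − cos(ξ p_N)` at energy `E₀ + ξ²` satisfies `N² D_N → 0`. -/
theorem KP_dispersion_continuum_limit (γ L V : ℝ) (hγ : 0 < γ) (hL : 0 < L) (hV : 0 < V)
    (E₀ : ℝ) (hE₀ : E₀ = γ * V / (1 + γ)) (ξ : ℝ) (hξ : E₀ + ξ ^ 2 < V)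
    (k z : ℝ) (hk : k = Real.sqrt (E₀ + ξ ^ 2)) (hz : z = Real.sqrt (V - E₀ - ξ ^ 2))
    (δ lam p D : ℕ → ℝ)
    (hδ : ∀ N, δ N = L / ((1 + γ) * N)) (hlam : ∀ N, lam N = γ * L / ((1 + γ) * N))
    (hp : ∀ N, p N = L / N)
    (hD : ∀ N, D N = (Real.cos (k * δ N) * Real.cosh (z * lam N)
        + (z ^ 2 - k ^ 2) / (2 * k * z) * Real.sin (k * δ N) * Real.sinh (z * lam N))
      - Real.cos (ξ * p N)) :
    Tendsto (fun N : ℕ => (N : ℝ) ^ 2 * D N) atTop (nhds 0) :=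
  KP_dispersion_continuum_limit_general γ L V hγ hV E₀ hE₀ ξ hξ k z hk hz δ lam p D hδ hlam hp hD
end
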